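/- Let p be a prime and let C₁ and C₂ be LCD linear codes of length n over the finite field 𝔽_p with generator matrices G₁ and G₂ respectively (each Gᵢ an mᵢ × n matrix of full row rank whose rows span Cᵢ; LCD of Cᵢ implies GᵢGᵢᵀ is invertible). Then C₁ and C₂ are permutation equivalent if and only if the symmetric matrices G₁ᵀ(G₁G₁ᵀ)⁻¹G₁ and G₂ᵀ(G₂G₂ᵀ)⁻¹G₂ are graph isomorphic. -/

import Mathlib

open Matrix

/-- The dual code of a linear code `C ⊆ 𝔽_pⁿ`. -/
def dualCode {p n : ℕ} (C : Submodule (ZMod p) (Fin n → ZMod p)) :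
    Submodule (ZMod p) (Fin n → ZMod p) where
  carrier := {x | ∀ c ∈ C, dotProduct x c = 0}
  add_mem' := by
    intro a b ha hb c hc
    simp [add_dotProduct, ha c hc, hb c hc]
  zero_mem' := by
    intro c hc
    simp
  smul_mem' := by
    intro r x hx c hc
    simp [smul_dotProduct, hx c hc]

/-- Permutation equivalence of two codes of length `n`. -/
def PermEquiv {p n : ℕ} (C₁ C₂ : Submodule (ZMod p) (Fin n → ZMod p)) : Prop :=
  ∃ σ : Equiv.Perm (Fin n),
    (C₁ : Set (Fin n → ZMod p)) = (fun c => fun i => c (σ i)) '' (C₂ : Set (Fin n → ZMod p))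

/-- A matrix is a permutation matrix if it arises from a permutation. -/
def IsPermMatrix {ι R : Type*} [DecidableEq ι] [Zero R] [One R]
    (P : Matrix ι ι R) : Prop :=
  ∃ σ : Equiv.Perm ι, P = σ.permMatrix R

section Aux

open Matrix

variable {p n m : ℕ} [Fact p.Prime]

private lemma sum_smul_eq_vecMul (u : Fin m → ZMod p) (G : Matrix (Fin m) (Fin n) (ZMod p)) :
    ∑ i, u i • G i = u ᵥ* G := by
  ext j
  simp [Matrix.vecMul, dotProduct, Finset.sum_apply]

private lemma mem_span_G {G : Matrix (Fin m) (Fin n) (ZMod p)} {x : Fin n → ZMod p} :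
    x ∈ Submodule.span (ZMod p) (Set.range G) ↔ ∃ u : Fin m → ZMod p, x = u ᵥ* G := by
  erw [Submodule.mem_span_range_iff_exists_fun (R := ZMod p) (v := G)]
  constructor
  · rintro ⟨u, hu⟩
    exact ⟨u, by rw [← hu, sum_smul_eq_vecMul]⟩
  · rintro ⟨u, rfl⟩
    exact ⟨u, sum_smul_eq_vecMul u G⟩

private lemma gram_isUnit {C : Submodule (ZMod p) (Fin n → ZMod p)}
    (hLCD : C ⊓ dualCode C = ⊥) {G : Matrix (Fin m) (Fin n) (ZMod p)}
    (hspan : Submodule.span (ZMod p) (Set.range G) = C)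
    (hli : LinearIndependent (ZMod p) G) : IsUnit (G * Gᵀ) := by
  rw [← Matrix.vecMul_injective_iff_isUnit]
  have h0 : ∀ v : Fin m → ZMod p, v ᵥ* (G * Gᵀ) = 0 → v = 0 := by
    intro v hv
    have hc : v ᵥ* G ∈ C := hspan ▸ mem_span_G.2 ⟨v, rfl⟩
    have hcd : v ᵥ* G ∈ dualCode C := by
      intro x hx
      obtain ⟨u, rfl⟩ := mem_span_G.1 (hspan ▸ hx : x ∈ Submodule.span (ZMod p) (Set.range G))
      have : u ᵥ* G = Gᵀ *ᵥ u := by rw [← Matrix.vecMul_transpose, Matrix.transpose_transpose]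
      rw [this, Matrix.dotProduct_mulVec, Matrix.vecMul_vecMul, hv, zero_dotProduct]
    have : v ᵥ* G = 0 := by
      have := hLCD ▸ Submodule.mem_inf.2 ⟨hc, hcd⟩
      simpa using this
    have hz := (Fintype.linearIndependent_iff.1 hli) v (by rw [sum_smul_eq_vecMul, this])
    funext i; exact hz i
  intro v w hvw
  have hvw' : v ᵥ* (G * Gᵀ) = w ᵥ* (G * Gᵀ) := hvw
  have : (v - w) ᵥ* (G * Gᵀ) = 0 := by
    rw [Matrix.sub_vecMul, hvw', sub_self]
  have := h0 _ this
  exact sub_eq_zero.1 this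

/-- the projection matrix -/
private noncomputable def projMat (G : Matrix (Fin m) (Fin n) (ZMod p)) : Matrix (Fin n) (Fin n) (ZMod p) :=
  Gᵀ * (G * Gᵀ)⁻¹ * G

private lemma vecMul_proj_mem {C : Submodule (ZMod p) (Fin n → ZMod p)}
    {G : Matrix (Fin m) (Fin n) (ZMod p)}
    (hspan : Submodule.span (ZMod p) (Set.range G) = C) (x : Fin n → ZMod p) :
    x ᵥ* projMat G ∈ C := by
  rw [projMat, ← Matrix.vecMul_vecMul]
  exact hspan ▸ mem_span_G.2 ⟨_, rfl⟩

private lemma vecMul_proj_of_mem {C : Submodule (ZMod p) (Fin n → ZMod p)}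
    {G : Matrix (Fin m) (Fin n) (ZMod p)} (hU : IsUnit (G * Gᵀ))
    (hspan : Submodule.span (ZMod p) (Set.range G) = C) {x : Fin n → ZMod p}
    (hx : x ∈ C) : x ᵥ* projMat G = x := by
  obtain ⟨u, rfl⟩ := mem_span_G.1 (hspan ▸ hx : x ∈ Submodule.span (ZMod p) (Set.range G))
  have key : G * projMat G = G := by
    rw [projMat, ← Matrix.mul_assoc, ← Matrix.mul_assoc,
      Matrix.mul_nonsing_inv _ ((Matrix.isUnit_iff_isUnit_det _).1 hU), Matrix.one_mul]
  rw [Matrix.vecMul_vecMul, key]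

private lemma vecMul_proj_of_mem_dual {C : Submodule (ZMod p) (Fin n → ZMod p)}
    {G : Matrix (Fin m) (Fin n) (ZMod p)}
    (hspan : Submodule.span (ZMod p) (Set.range G) = C) {x : Fin n → ZMod p}
    (hx : x ∈ dualCode C) : x ᵥ* projMat G = 0 := by
  have hGt : x ᵥ* Gᵀ = 0 := by
    funext i
    rw [Matrix.vecMul_transpose]
    have : G i ∈ C := hspan ▸ Submodule.subset_span ⟨i, rfl⟩
    have := hx (G i) this
    simpa [Matrix.mulVec, dotProduct_comm] using this
  rw [projMat, Matrix.mul_assoc, ← Matrix.vecMul_vecMul, hGt, Matrix.zero_vecMul]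

private lemma sub_vecMul_proj_mem_dual {C : Submodule (ZMod p) (Fin n → ZMod p)}
    {G : Matrix (Fin m) (Fin n) (ZMod p)} (hU : IsUnit (G * Gᵀ))
    (hspan : Submodule.span (ZMod p) (Set.range G) = C) (x : Fin n → ZMod p) :
    x - x ᵥ* projMat G ∈ dualCode C := by
  intro c hc
  obtain ⟨u, rfl⟩ := mem_span_G.1 (hspan ▸ hc : c ∈ Submodule.span (ZMod p) (Set.range G))
  have hc' : u ᵥ* G = Gᵀ *ᵥ u := by rw [← Matrix.vecMul_transpose, Matrix.transpose_transpose]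
  have key : projMat G * Gᵀ = Gᵀ := by
    rw [projMat, Matrix.mul_assoc, Matrix.mul_assoc,
      Matrix.nonsing_inv_mul _ ((Matrix.isUnit_iff_isUnit_det _).1 hU), Matrix.mul_one]
  rw [hc', Matrix.dotProduct_mulVec, Matrix.sub_vecMul, Matrix.vecMul_vecMul, key,
    sub_self, zero_dotProduct]

private lemma mem_iff_vecMul_proj {C : Submodule (ZMod p) (Fin n → ZMod p)}
    {G : Matrix (Fin m) (Fin n) (ZMod p)} (hU : IsUnit (G * Gᵀ))
    (hspan : Submodule.span (ZMod p) (Set.range G) = C) {x : Fin n → ZMod p} :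
    x ∈ C ↔ x ᵥ* projMat G = x := by
  constructor
  · exact vecMul_proj_of_mem hU hspan
  · intro h; rw [← h]; exact vecMul_proj_mem hspan x

private lemma matrix_ext_vecMul {A B : Matrix (Fin n) (Fin n) (ZMod p)}
    (h : ∀ x : Fin n → ZMod p, x ᵥ* A = x ᵥ* B) : A = B := by
  ext i j
  have := congrFun (h (Pi.single i 1)) j
  simpa [Matrix.single_one_vecMul] using this

private lemma vecMul_permMatrix {σ : Equiv.Perm (Fin n)} (v : Fin n → ZMod p) :
    v ᵥ* (σ.permMatrix (ZMod p)) = fun j => v (σ⁻¹ j) := by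
  ext j
  have key : ∀ x : Fin n, (σ x = j) ↔ (x = σ⁻¹ j) := fun x =>
    Equiv.apply_eq_iff_eq_symm_apply σ
  simp [Equiv.Perm.permMatrix, Matrix.vecMul, dotProduct, PEquiv.toMatrix_apply,
    Equiv.toPEquiv_apply, key]

private lemma transpose_permMatrix' (σ : Equiv.Perm (Fin n)) :
    (σ.permMatrix (ZMod p))ᵀ = (σ⁻¹).permMatrix (ZMod p) := by
  rw [Equiv.Perm.permMatrix, ← PEquiv.toMatrix_symm, ← Equiv.toPEquiv_symm]; rfl

private lemma permMatrix_mul_transpose (σ : Equiv.Perm (Fin n)) :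
    (σ.permMatrix (ZMod p)) * (σ.permMatrix (ZMod p))ᵀ = 1 := by
  rw [Equiv.Perm.permMatrix, ← PEquiv.toMatrix_symm, ← Equiv.toPEquiv_symm,
    ← PEquiv.toMatrix_trans, ← Equiv.toPEquiv_trans]
  simp [PEquiv.toMatrix_refl]

private lemma transpose_mul_permMatrix (σ : Equiv.Perm (Fin n)) :
    (σ.permMatrix (ZMod p))ᵀ * (σ.permMatrix (ZMod p)) = 1 := by
  have := permMatrix_mul_transpose (p := p) σ⁻¹
  rwa [transpose_permMatrix' σ⁻¹, inv_inv, ← transpose_permMatrix'] at this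

private lemma dot_vecMul_permMatrix (σ : Equiv.Perm (Fin n)) (v w : Fin n → ZMod p) :
    (v ᵥ* σ.permMatrix (ZMod p)) ⬝ᵥ (w ᵥ* σ.permMatrix (ZMod p)) = v ⬝ᵥ w := by
  have h1 : w ᵥ* σ.permMatrix (ZMod p) = (σ.permMatrix (ZMod p))ᵀ *ᵥ w := by
    rw [← Matrix.vecMul_transpose, Matrix.transpose_transpose]
  rw [h1, Matrix.dotProduct_mulVec, Matrix.vecMul_vecMul, permMatrix_mul_transpose,
    Matrix.vecMul_one]

end Aux

/-- Let `p` be a prime and let `C₁, C₂` be LCD linear codes of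
length `n` over `𝔽_p` with generator matrices `G₁, G₂` (full row rank, rows
spanning the code; LCD implies `GᵢGᵢᵀ` invertible).  Then `C₁` and `C₂` are
permutation equivalent iff the symmetric matrices `Gᵢᵀ(GᵢGᵢᵀ)⁻¹Gᵢ` are graph
isomorphic, i.e. conjugate by a permutation matrix. -/
theorem permEquiv_iff_projections_graphIsomorphic_field {p n m₁ m₂ : ℕ}
    [Fact p.Prime]
    (C₁ C₂ : Submodule (ZMod p) (Fin n → ZMod p))
    (hLCD₁ : C₁ ⊓ dualCode C₁ = ⊥) (hLCD₂ : C₂ ⊓ dualCode C₂ = ⊥)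
    (G₁ : Matrix (Fin m₁) (Fin n) (ZMod p)) (G₂ : Matrix (Fin m₂) (Fin n) (ZMod p))
    (hspan₁ : Submodule.span (ZMod p) (Set.range G₁) = C₁)
    (hspan₂ : Submodule.span (ZMod p) (Set.range G₂) = C₂)
    (hli₁ : LinearIndependent (ZMod p) G₁)
    (hli₂ : LinearIndependent (ZMod p) G₂) :
    PermEquiv C₁ C₂ ↔
      ∃ P : Matrix (Fin n) (Fin n) (ZMod p), IsPermMatrix P ∧
        G₁ᵀ * (G₁ * G₁ᵀ)⁻¹ * G₁ = Pᵀ * (G₂ᵀ * (G₂ * G₂ᵀ)⁻¹ * G₂) * P := by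

  have hU₁ : IsUnit (G₁ * G₁ᵀ) := gram_isUnit hLCD₁ hspan₁ hli₁
  have hU₂ : IsUnit (G₂ * G₂ᵀ) := gram_isUnit hLCD₂ hspan₂ hli₂
  show PermEquiv C₁ C₂ ↔ ∃ P, IsPermMatrix P ∧ projMat G₁ = Pᵀ * projMat G₂ * P
  constructor
  · rintro ⟨σ, hσ⟩
    set P := σ.permMatrix (ZMod p) with hPdef
    refine ⟨Pᵀ, ⟨σ⁻¹, transpose_permMatrix' σ⟩, ?_⟩
    rw [Matrix.transpose_transpose]
    -- membership reformulation
    have hmem : ∀ x : Fin n → ZMod p, x ∈ C₁ ↔ ∃ c ∈ C₂, x = c ᵥ* Pᵀ := by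
      intro x
      constructor
      · intro hx
        have : x ∈ (fun c => fun i => c (σ i)) '' (C₂ : Set (Fin n → ZMod p)) := hσ ▸ hx
        obtain ⟨c, hc, hcx⟩ := this
        refine ⟨c, hc, ?_⟩
        rw [← hcx, transpose_permMatrix', _root_.vecMul_permMatrix]
        simp
      · rintro ⟨c, hc, rfl⟩
        have : (fun i => c (σ i)) ∈ (C₁ : Set (Fin n → ZMod p)) := hσ ▸ ⟨c, hc, rfl⟩
        have he : c ᵥ* Pᵀ = fun i => c (σ i) := by
          rw [transpose_permMatrix', _root_.vecMul_permMatrix]; simp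
        rw [he]; exact this
    apply matrix_ext_vecMul
    intro x
    have hxa : x ᵥ* projMat G₁ ∈ C₁ := vecMul_proj_mem hspan₁ x
    have hxb : x - x ᵥ* projMat G₁ ∈ dualCode C₁ := sub_vecMul_proj_mem_dual hU₁ hspan₁ x
    set a := x ᵥ* projMat G₁ with ha
    set b := x - a with hb
    have hx : x = a + b := by rw [hb]; abel
    -- a part
    obtain ⟨c, hc, hac⟩ := (hmem a).1 hxa
    have haP : a ᵥ* P = c := by
      rw [hac, Matrix.vecMul_vecMul, transpose_mul_permMatrix, Matrix.vecMul_one]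
    have haM : a ᵥ* (P * projMat G₂ * Pᵀ) = a := by
      rw [← Matrix.vecMul_vecMul, ← Matrix.vecMul_vecMul, haP,
        vecMul_proj_of_mem hU₂ hspan₂ hc, ← hac]
    -- b part
    have hbdual : b ᵥ* P ∈ dualCode C₂ := by
      intro d hd
      have hdC₁ : d ᵥ* Pᵀ ∈ C₁ := (hmem _).2 ⟨d, hd, rfl⟩
      have hd' : d = (d ᵥ* Pᵀ) ᵥ* P := by
        rw [Matrix.vecMul_vecMul, transpose_mul_permMatrix, Matrix.vecMul_one]
      rw [hd', dot_vecMul_permMatrix]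
      exact hxb _ hdC₁
    have hbM : b ᵥ* (P * projMat G₂ * Pᵀ) = 0 := by
      rw [← Matrix.vecMul_vecMul, ← Matrix.vecMul_vecMul,
        vecMul_proj_of_mem_dual hspan₂ hbdual, Matrix.zero_vecMul]
    have hbQ : b ᵥ* projMat G₁ = 0 := vecMul_proj_of_mem_dual hspan₁ hxb
    rw [hx, Matrix.add_vecMul, hbM, haM, add_zero]
  · rintro ⟨P, ⟨σ, rfl⟩, hP⟩
    refine ⟨σ⁻¹, ?_⟩
    ext x
    have himg : ∀ c : Fin n → ZMod p, (fun i => c (σ⁻¹ i)) = c ᵥ* σ.permMatrix (ZMod p) := by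
      intro c; rw [_root_.vecMul_permMatrix]
    constructor
    · intro hx
      have hfix : x ᵥ* projMat G₁ = x := vecMul_proj_of_mem hU₁ hspan₁ hx
      rw [hP] at hfix
      set y := x ᵥ* (σ.permMatrix (ZMod p))ᵀ with hy
      have h1 : (y ᵥ* projMat G₂) ᵥ* σ.permMatrix (ZMod p) = x := by
        rw [Matrix.vecMul_vecMul, hy, Matrix.vecMul_vecMul, ← Matrix.mul_assoc]
        exact hfix
      have h2 : y ᵥ* projMat G₂ = y := by
        have := congrArg (fun z => z ᵥ* (σ.permMatrix (ZMod p))ᵀ) h1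
        have hpp : σ.permMatrix (ZMod p) * (σ⁻¹).permMatrix (ZMod p) = 1 := by
          rw [← transpose_permMatrix']; exact permMatrix_mul_transpose σ
        simpa [Matrix.vecMul_vecMul, Matrix.mul_assoc, permMatrix_mul_transpose,
          Matrix.mul_one, hy, hpp] using this
      have hyC₂ : y ∈ C₂ := (mem_iff_vecMul_proj hU₂ hspan₂).2 h2
      refine ⟨y, hyC₂, ?_⟩
      have hgoal : (fun i => y (σ⁻¹ i)) = x := by
        rw [himg y, hy, Matrix.vecMul_vecMul, transpose_mul_permMatrix, Matrix.vecMul_one]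
      exact hgoal
    · rintro ⟨c, hc, rfl⟩
      show (fun i => c (σ⁻¹ i)) ∈ (C₁ : Set (Fin n → ZMod p))
      rw [himg c]
      apply (mem_iff_vecMul_proj hU₁ hspan₁).2
      have hkey : σ.permMatrix (ZMod p) * ((σ.permMatrix (ZMod p))ᵀ * projMat G₂ *
          σ.permMatrix (ZMod p)) = projMat G₂ * σ.permMatrix (ZMod p) := by
        rw [← Matrix.mul_assoc, ← Matrix.mul_assoc, permMatrix_mul_transpose, Matrix.one_mul]
      rw [hP, Matrix.vecMul_vecMul, hkey, ← Matrix.vecMul_vecMul,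
        vecMul_proj_of_mem hU₂ hspan₂ hc]
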